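/- Multiplicities for the trapeze T_θ: let θ ∈ (0, π/2) and let ℓ_1 = 2cos θ, ℓ_2 = ℓ_4 = 1/cos θ, ℓ_3 = 2 tan θ sin θ. For λ ∈ ℝ let S(λ) be the linear space of pairs (α, β) ∈ ℝ⁴ × ℝ⁴ satisfying, cyclically in i (indices mod 4), α_{i+1} = α_i + β_i and λ α_i = β_{i−1}/ℓ_{i−1} − β_i/ℓ_i. Then S(2cos θ) has dimension 2 (the first nonzero eigenvalue of T_θ is double) and S(1/(cos θ sin² θ)) has dimension 1 (the second nonzero eigenvalue is simple). -/

import Mathlib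

open scoped Real

noncomputable section

/-- The side lengths of the trapeze `T_θ` with vertices
`A₁ = (cos θ, sin θ)`, `A₂ = (−cos θ, sin θ)`, `A₃ = (−tan θ sin θ, −sin θ)`,
`A₄ = (tan θ sin θ, −sin θ)`: `ℓ₁ = 2 cos θ`, `ℓ₂ = ℓ₄ = 1/cos θ`, `ℓ₃ = 2 tan θ sin θ`.
The index `i ∈ ZMod 4` labels the side `[Aᵢ, Aᵢ₊₁]` (with `0 = 4`). -/
def trapezeLen (θ : ℝ) : ZMod 4 → ℝ := fun i =>
  if i = 1 then 2 * Real.cos θ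
  else if i = 2 then 1 / Real.cos θ
  else if i = 3 then 2 * Real.tan θ * Real.sin θ
  else 1 / Real.cos θ

/-- The space `S(λ)` of pairs `(α, β)` satisfying, cyclically mod 4, `αᵢ₊₁ = αᵢ + βᵢ` and
`λ αᵢ = βᵢ₋₁/ℓᵢ₋₁ − βᵢ/ℓᵢ` for the side lengths of the trapeze `T_θ`: the space of
piecewise-affine eigenfunctions of `T_θ` for `λ`. -/
def trapezeEigenspace (θ lam : ℝ) : Submodule ℝ ((ZMod 4 → ℝ) × (ZMod 4 → ℝ)) where
  carrier := { p | ∀ i, p.1 (i + 1) = p.1 i + p.2 i ∧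
    lam * p.1 i = p.2 (i - 1) / trapezeLen θ (i - 1) - p.2 i / trapezeLen θ i }
  add_mem' := by
    intro p q hp hq i
    obtain ⟨h1, h2⟩ := hp i
    obtain ⟨h3, h4⟩ := hq i
    refine ⟨?_, ?_⟩
    · simp only [Prod.fst_add, Prod.snd_add, Pi.add_apply, h1, h3]; ring
    · simp only [Prod.fst_add, Prod.snd_add, Pi.add_apply, mul_add, h2, h4, add_div]; ring
  zero_mem' := by intro i; simp
  smul_mem' := by
    intro c p hp i
    obtain ⟨h1, h2⟩ := hp i
    refine ⟨?_, ?_⟩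
    · simp only [Prod.smul_fst, Prod.smul_snd, Pi.smul_apply, smul_eq_mul, h1]; ring
    · simp only [Prod.smul_fst, Prod.smul_snd, Pi.smul_apply, smul_eq_mul]
      rw [mul_comm lam (c * p.1 i), mul_assoc, mul_comm (p.1 i) lam, h2]
      ring

/-!
Since `β` is determined by `α` through `βᵢ = αᵢ₊₁ − αᵢ`, the space `S(λ)` is the `λ`-eigenspace
of the weighted Laplacian of the 4-cycle with edge weights `1/ℓᵢ`. Explicit eigenvectors show that
the eigenspaces for `0`, `2 cos θ` and `1/(cos θ sin² θ)` have dimensions at least `1`, `2` and `1`.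
These three eigenvalues are distinct and eigenspaces of distinct eigenvalues are independent, so the
dimensions add up to at most `4`, which forces equality.
-/

open Module Module.End Real

theorem iSupIndep.finrank_biSup {ι K V : Type*} [DivisionRing K] [AddCommGroup V] [Module K V]
    [FiniteDimensional K V] {p : ι → Submodule K V} (hp : iSupIndep p) (s : Finset ι) :
    finrank K ↥(⨆ i ∈ s, p i) = ∑ i ∈ s, finrank K (p i) := by
  classical
  induction s using Finset.induction_on with
  | empty => simp
  | insert a s ha ih =>
    have hdisj : Disjoint (p a) (⨆ i ∈ s, p i) := by
      simpa using hp.disjoint_biSup (y := ↑s) (by simpa using ha)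
    rw [Finset.sum_insert ha, ← ih, Finset.iSup_insert,
      ← Submodule.finrank_sup_add_finrank_inf_eq, hdisj.eq_bot, finrank_bot, add_zero]

theorem Module.End.sum_finrank_eigenspace_le {K V : Type*} [Field K] [AddCommGroup V]
    [Module K V] [FiniteDimensional K V] (f : End K V) (s : Finset K) :
    ∑ μ ∈ s, finrank K (f.eigenspace μ) ≤ finrank K V :=
  (f.eigenspaces_iSupIndep.finrank_biSup s).symm.trans_le (Submodule.finrank_le _)

theorem Submodule.card_le_finrank_of_linearIndependent {ι K V : Type*} [Fintype ι]
    [DivisionRing K] [AddCommGroup V] [Module K V] [FiniteDimensional K V] {p : Submodule K V}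
    {v : ι → V} (hv : LinearIndependent K v) (hvp : ∀ i, v i ∈ p) :
    Fintype.card ι ≤ finrank K p :=
  (finrank_span_eq_card hv).symm.trans_le
    (Submodule.finrank_mono (Submodule.span_le.2 (Set.range_subset_iff.2 hvp)))

section CycleLaplacian

variable {n : ℕ}

/-- `(L α)ᵢ = βᵢ₋₁/ℓᵢ₋₁ − βᵢ/ℓᵢ` with `βᵢ = αᵢ₊₁ − αᵢ`. -/
def cycleLaplacian (ℓ : ZMod n → ℝ) : End ℝ (ZMod n → ℝ) where
  toFun α i := (α i - α (i - 1)) / ℓ (i - 1) - (α (i + 1) - α i) / ℓ i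
  map_add' α β := by ext i; simp only [Pi.add_apply]; ring
  map_smul' a α := by ext i; simp only [Pi.smul_apply, smul_eq_mul, RingHom.id_apply]; ring

theorem mem_eigenspace_cycleLaplacian {ℓ : ZMod n → ℝ} {μ : ℝ} {α : ZMod n → ℝ} :
    α ∈ eigenspace (cycleLaplacian ℓ) μ ↔
      ∀ i, (α i - α (i - 1)) / ℓ (i - 1) - (α (i + 1) - α i) / ℓ i = μ * α i := by
  rw [mem_eigenspace_iff, funext_iff]
  rfl

theorem const_mem_eigenspace_cycleLaplacian_zero (ℓ : ZMod n → ℝ) (x : ℝ) :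
    (fun _ => x) ∈ eigenspace (cycleLaplacian ℓ) 0 :=
  mem_eigenspace_cycleLaplacian.2 fun i => by simp

theorem one_le_finrank_eigenspace_cycleLaplacian_zero [NeZero n] (ℓ : ZMod n → ℝ) :
    1 ≤ finrank ℝ (eigenspace (cycleLaplacian ℓ) 0) :=
  Submodule.one_le_finrank_iff.2 <| (Submodule.ne_bot_iff _).2
    ⟨_, const_mem_eigenspace_cycleLaplacian_zero ℓ 1, fun h => one_ne_zero (congrFun h 0)⟩

end CycleLaplacian

theorem ZMod.forall_four {P : ZMod 4 → Prop} : (∀ i, P i) ↔ P 0 ∧ P 1 ∧ P 2 ∧ P 3 :=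
  ⟨fun h => ⟨h 0, h 1, h 2, h 3⟩, fun ⟨h0, h1, h2, h3⟩ i => by
    fin_cases i <;> assumption⟩

theorem vecCons_mem_eigenspace_cycleLaplacian {ℓ : ZMod 4 → ℝ} {μ a b c d : ℝ} :
    (![a, b, c, d] : ZMod 4 → ℝ) ∈ eigenspace (cycleLaplacian ℓ) μ ↔
      (a - d) / ℓ 3 - (b - a) / ℓ 0 = μ * a ∧ (b - a) / ℓ 0 - (c - b) / ℓ 1 = μ * b ∧
        (c - b) / ℓ 1 - (d - c) / ℓ 2 = μ * c ∧ (d - c) / ℓ 2 - (a - d) / ℓ 3 = μ * d :=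
  mem_eigenspace_cycleLaplacian.trans ZMod.forall_four

def trapezeEigenspaceEquiv (θ μ : ℝ) :
    trapezeEigenspace θ μ ≃ₗ[ℝ] eigenspace (cycleLaplacian (trapezeLen θ)) μ where
  toFun p := ⟨p.1.1, mem_eigenspace_cycleLaplacian.2 fun i => by
    obtain ⟨hα, hμ⟩ := p.2 i
    have hα' := (p.2 (i - 1)).1
    rw [sub_add_cancel] at hα'
    rw [hμ, hα, hα']
    ring⟩
  invFun α := ⟨(α.1, fun i => α.1 (i + 1) - α.1 i), fun i => ⟨by ring, by
    have hα := mem_eigenspace_cycleLaplacian.1 α.2 i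
    simp only [sub_add_cancel]
    linarith⟩⟩
  map_add' _ _ := rfl
  map_smul' _ _ := rfl
  left_inv p := Subtype.ext <| Prod.ext rfl <| funext fun i => by
    simp only [(p.2 i).1]; ring
  right_inv _ := rfl

theorem trapezeLen_zero (θ : ℝ) : trapezeLen θ 0 = 1 / cos θ := rfl

theorem trapezeLen_one (θ : ℝ) : trapezeLen θ 1 = 2 * cos θ := rfl

theorem trapezeLen_two (θ : ℝ) : trapezeLen θ 2 = 1 / cos θ := rfl

theorem trapezeLen_three (θ : ℝ) : trapezeLen θ 3 = 2 * sin θ ^ 2 / cos θ := by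
  rw [show trapezeLen θ 3 = 2 * tan θ * sin θ from rfl, tan_eq_sin_div_cos]
  ring

/- "Even" and "odd" refer to the reflection `x ↦ −x` of `T_θ`, which swaps `A₁ ↔ A₂` and
`A₃ ↔ A₄`, i.e. the coordinates `α₁ ↔ α₂` and `α₃ ↔ α₀`. -/

theorem trapeze_even_mem_eigenspace_two_cos (θ : ℝ) (hc : cos θ ≠ 0) :
    (![-1, 1, 1, -1] : ZMod 4 → ℝ) ∈
      eigenspace (cycleLaplacian (trapezeLen θ)) (2 * cos θ) := by
  rw [vecCons_mem_eigenspace_cycleLaplacian, trapezeLen_zero, trapezeLen_one, trapezeLen_two,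
    trapezeLen_three]
  refine ⟨?_, ?_, ?_, ?_⟩ <;> field_simp <;> ring

theorem trapeze_odd_mem_eigenspace_two_cos (θ : ℝ) (hc : cos θ ≠ 0) (hs : sin θ ≠ 0) :
    (![sin θ ^ 2, cos θ ^ 2, -cos θ ^ 2, -sin θ ^ 2] : ZMod 4 → ℝ) ∈
      eigenspace (cycleLaplacian (trapezeLen θ)) (2 * cos θ) := by
  have hs' : 1 - cos θ ^ 2 ≠ 0 := sin_sq θ ▸ pow_ne_zero 2 hs
  rw [vecCons_mem_eigenspace_cycleLaplacian, trapezeLen_zero, trapezeLen_one, trapezeLen_two,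
    trapezeLen_three, sin_sq]
  refine ⟨?_, ?_, ?_, ?_⟩ <;> field_simp <;> ring

theorem trapeze_odd_mem_eigenspace_one_div_cos_mul_sin_sq (θ : ℝ) (hc : cos θ ≠ 0)
    (hs : sin θ ≠ 0) :
    (![-cos θ ^ 2, sin θ ^ 2, -sin θ ^ 2, cos θ ^ 2] : ZMod 4 → ℝ) ∈
      eigenspace (cycleLaplacian (trapezeLen θ)) (1 / (cos θ * sin θ ^ 2)) := by
  have hs' : 1 - cos θ ^ 2 ≠ 0 := sin_sq θ ▸ pow_ne_zero 2 hs
  rw [vecCons_mem_eigenspace_cycleLaplacian, trapezeLen_zero, trapezeLen_one, trapezeLen_two,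
    trapezeLen_three, sin_sq]
  refine ⟨?_, ?_, ?_, ?_⟩ <;> field_simp <;> ring

theorem trapeze_two_cos_eigenvectors_linearIndependent (θ : ℝ) (hc : cos θ ≠ 0) :
    LinearIndependent ℝ ![(![-1, 1, 1, -1] : ZMod 4 → ℝ),
      ![sin θ ^ 2, cos θ ^ 2, -cos θ ^ 2, -sin θ ^ 2]] := by
  refine LinearIndependent.pair_iff.2 fun x y h => ?_
  have h₁ : x * 1 + y * cos θ ^ 2 = 0 := congrFun h 1
  have h₂ : x * 1 + y * -cos θ ^ 2 = 0 := congrFun h 2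
  have hy : y = 0 :=
    (mul_eq_zero.1 (by linarith : y * cos θ ^ 2 = 0)).resolve_right (pow_ne_zero 2 hc)
  exact ⟨by simpa [hy] using h₁, hy⟩

-- `2 cos² θ sin² θ = sin² (2θ) / 2 < 1`
theorem two_mul_cos_ne_one_div_cos_mul_sin_sq (θ : ℝ) (h : cos θ * sin θ ^ 2 ≠ 0) :
    2 * cos θ ≠ 1 / (cos θ * sin θ ^ 2) := by
  rw [Ne, eq_div_iff h]
  intro heq
  nlinarith [sq_nonneg (cos θ ^ 2 - sin θ ^ 2), sin_sq_add_cos_sq θ]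

/-- **Multiplicities of the nonzero eigenvalues of the trapeze `T_θ`**: for
`θ ∈ (0, π/2)`, the first nonzero eigenvalue `2 cos θ` is double and the second one
`1/(cos θ sin² θ)` is simple. -/
theorem trapeze_eigenvalue_multiplicities (θ : ℝ) (hθ : θ ∈ Set.Ioo 0 (π / 2)) :
    Module.finrank ℝ ↥(trapezeEigenspace θ (2 * Real.cos θ)) = 2 ∧
      Module.finrank ℝ ↥(trapezeEigenspace θ (1 / (Real.cos θ * Real.sin θ ^ 2))) = 1 := by
  have hc : 0 < cos θ := cos_pos_of_mem_Ioo ⟨by linarith [hθ.1, pi_pos], hθ.2⟩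
  have hs : 0 < sin θ := sin_pos_of_pos_of_lt_pi hθ.1 (by linarith [hθ.2, pi_pos])
  rw [(trapezeEigenspaceEquiv θ _).finrank_eq, (trapezeEigenspaceEquiv θ _).finrank_eq]
  set L := cycleLaplacian (trapezeLen θ)
  have h₀ : 1 ≤ finrank ℝ (eigenspace L 0) := one_le_finrank_eigenspace_cycleLaplacian_zero _
  have h₁ : 2 ≤ finrank ℝ (eigenspace L (2 * cos θ)) :=
    Submodule.card_le_finrank_of_linearIndependent
      (trapeze_two_cos_eigenvectors_linearIndependent θ hc.ne')
      (Fin.forall_fin_two.2 ⟨trapeze_even_mem_eigenspace_two_cos θ hc.ne',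
        trapeze_odd_mem_eigenspace_two_cos θ hc.ne' hs.ne'⟩)
  have h₂ : 1 ≤ finrank ℝ (eigenspace L (1 / (cos θ * sin θ ^ 2))) :=
    Submodule.one_le_finrank_iff.2 <| (Submodule.ne_bot_iff _).2
      ⟨_, trapeze_odd_mem_eigenspace_one_div_cos_mul_sin_sq θ hc.ne' hs.ne',
        fun h => (pow_pos hc 2).ne' (congrFun h 3)⟩
  have hsum := L.sum_finrank_eigenspace_le {0, 2 * cos θ, 1 / (cos θ * sin θ ^ 2)}
  rw [Finset.sum_insert (by simp [hc.ne', hs.ne']),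
    Finset.sum_pair (two_mul_cos_ne_one_div_cos_mul_sin_sq θ (by positivity)),
    finrank_fintype_fun_eq_card, ZMod.card] at hsum
  omega
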